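/- Let Ω ⊂ ℝ^d be a bounded measurable set, K, Q ∈ L¹(ℝ^d) with K even and nonnegative, Q even, and |Q| ≤ K almost everywhere. Fix integers 1 ≤ p < q. Then for every δ > 0 there is a constant C_δ such that for all ε > 0 and all φ ∈ L^{q+2}(Ω): |E^Q_ε(φ)| ≤ C_δ (1 + E^K_ε(φ)) + (δ/4)‖φ‖²_{L²(Ω)}, where E^K_ε(φ) = (1/4)∬_{Ω×Ω} K_ε(x−y)|φ(x)|²|φ(y)|^q dx dy and E^Q_ε(φ) = (1/4)∬_{Ω×Ω} Q_ε(x−y)|φ(x)|²|φ(y)|^p dx dy. -/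

import Mathlib

open MeasureTheory

lemma abs_integral_le_integral_abs_aux {α : Type*} [MeasurableSpace α] {μ : MeasureTheory.Measure α} (f : α → ℝ) :
    |∫ x, f x ∂μ| ≤ ∫ x, |f x| ∂μ := by
  simpa [Real.norm_eq_abs] using MeasureTheory.norm_integral_le_integral_norm (μ := μ) f

lemma pow_bound_aux {p q : ℕ} (hp : 1 ≤ p) (hpq : p < q) {δ : ℝ} (hδ : 0 < δ) :
    ∀ t : ℝ, 0 ≤ t → t ^ p ≤ ((min δ 1)⁻¹) ^ q * t ^ q + δ := by
  intro t ht
  set δ' := min δ 1 with hd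
  have hδ'0 : 0 < δ' := lt_min hδ one_pos
  have hδ'1 : δ' ≤ 1 := min_le_right _ _
  have hδδ : δ' ≤ δ := min_le_left _ _
  have hCq : 0 ≤ (δ'⁻¹) ^ q * t ^ q := by positivity
  rcases le_or_gt t δ' with h | h
  · have h1 : t ^ p ≤ t ^ 1 := pow_le_pow_of_le_one ht (le_trans h hδ'1) hp
    rw [pow_one] at h1
    linarith
  · have hpow : 0 < δ' ^ q := pow_pos hδ'0 q
    have key : δ' ^ q * t ^ p ≤ t ^ q := by
      rcases le_or_gt t 1 with h1 | h1
      · have e1 : δ' ^ q ≤ t ^ q := pow_le_pow_left₀ hδ'0.le h.le q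
        have e2 : t ^ p ≤ 1 := pow_le_one₀ ht h1
        nlinarith [pow_nonneg ht q]
      · have e1 : t ^ p ≤ t ^ q := pow_le_pow_right₀ h1.le hpq.le
        have e2 : δ' ^ q ≤ 1 := pow_le_one₀ hδ'0.le hδ'1
        nlinarith [pow_nonneg ht p]
    have : t ^ p ≤ (δ'⁻¹) ^ q * t ^ q := by
      rw [inv_pow, ← div_eq_inv_mul, le_div_iff₀ hpow, mul_comm]
      exact key
    linarith

lemma ae_fst_prod' {α β : Type*} [MeasurableSpace α] [MeasurableSpace β] {μ : Measure α}
    {ν : Measure β} [SFinite ν] {P : α → Prop} (h : ∀ᵐ x ∂μ, P x) :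
    ∀ᵐ z ∂μ.prod ν, P z.1 := by
  rw [ae_iff] at h ⊢
  obtain ⟨N, hN, hNm, hN0⟩ := exists_measurable_superset_of_null h
  refine measure_mono_null (t := N ×ˢ (Set.univ : Set β))
    (fun z hz => Set.mem_prod.2 ⟨hN hz, Set.mem_univ z.2⟩) ?_
  rw [Measure.prod_prod, hN0, zero_mul]

lemma ae_smul_sub_notMem {d : ℕ} {ε : ℝ} (hε : ε ≠ 0) {A : Set (Fin d → ℝ)}
    (hA : volume A = 0) :
    ∀ᵐ z : (Fin d → ℝ) × (Fin d → ℝ), ε⁻¹ • (z.1 - z.2) ∉ A := by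
  obtain ⟨B, hAB, hBm, hB0⟩ := exists_measurable_superset_of_null hA
  have hBm' : MeasurableSet ((fun v : Fin d → ℝ => ε⁻¹ • v) ⁻¹' B) :=
    hBm.preimage (measurable_const_smul _)
  have hslice : ∀ x : Fin d → ℝ, volume ((fun y : Fin d → ℝ => ε⁻¹ • (x - y)) ⁻¹' B) = 0 := by
    intro x
    have he : (fun y : Fin d → ℝ => ε⁻¹ • (x - y)) ⁻¹' B
        = (fun y : Fin d → ℝ => x - y) ⁻¹' ((fun v : Fin d → ℝ => ε⁻¹ • v) ⁻¹' B) := rfl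
    rw [he, (Measure.measurePreserving_sub_left volume x).measure_preimage
        hBm'.nullMeasurableSet,
      Set.preimage_smul₀ (inv_ne_zero hε), inv_inv, Measure.addHaar_smul, hB0, mul_zero]
  have hSm : MeasurableSet {z : (Fin d → ℝ) × (Fin d → ℝ) | ε⁻¹ • (z.1 - z.2) ∈ B} :=
    hBm.preimage ((measurable_const_smul ε⁻¹).comp (measurable_fst.sub measurable_snd))
  have hS : volume {z : (Fin d → ℝ) × (Fin d → ℝ) | ε⁻¹ • (z.1 - z.2) ∈ B} = 0 := by
    rw [Measure.volume_eq_prod, Measure.prod_apply hSm]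
    have hx : ∀ x : Fin d → ℝ,
        volume (Prod.mk x ⁻¹' {z : (Fin d → ℝ) × (Fin d → ℝ) | ε⁻¹ • (z.1 - z.2) ∈ B}) = 0 :=
      fun x => hslice x
    simp only [hx, lintegral_zero]
  rw [ae_iff]
  refine measure_mono_null (fun z hz => ?_) hS
  exact hAB (not_not.mp hz)

/-- Control of the `Q`-nonlocal energy by the `K`-nonlocal energy: if `K` is
even, nonnegative and normalized, `Q` is even with `|Q| ≤ K` a.e., and
`1 ≤ p < q`, then for every `δ > 0` there is `C_δ > 0` such that for all
`ε > 0` and all `φ ∈ L^{q+2}(Ω)`,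
`|E^Q_ε(φ)| ≤ C_δ (1 + E^K_ε(φ)) + (δ/4) ‖φ‖²_{L²(Ω)}`. -/
theorem EQ_controlled_by_EK {d : ℕ} (Ω : Set (Fin d → ℝ))
    (hΩm : MeasurableSet Ω) (hΩb : Bornology.IsBounded Ω)
    (K Q : (Fin d → ℝ) → ℝ) (hKint : Integrable K) (hQint : Integrable Q)
    (hK0 : ∀ x, 0 ≤ K x) (hK1 : ∫ x, K x = 1)
    (hKeven : ∀ᵐ x, K (-x) = K x) (hQeven : ∀ᵐ x, Q (-x) = Q x)
    (hQK : ∀ᵐ x, |Q x| ≤ K x)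
    (p q : ℕ) (hp : 1 ≤ p) (hpq : p < q)
    (δ : ℝ) (hδ : 0 < δ) :
    ∃ Cδ : ℝ, 0 < Cδ ∧ ∀ ε : ℝ, 0 < ε →
      ∀ φ : (Fin d → ℝ) → ℝ, MemLp φ (q + 2) (volume.restrict Ω) →
        IntegrableOn
          (fun z : (Fin d → ℝ) × (Fin d → ℝ) =>
            (ε ^ d)⁻¹ * Q (ε⁻¹ • (z.1 - z.2)) * |φ z.1| ^ 2 * |φ z.2| ^ p)
          (Ω ×ˢ Ω) →
        IntegrableOn
          (fun z : (Fin d → ℝ) × (Fin d → ℝ) =>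
            (ε ^ d)⁻¹ * K (ε⁻¹ • (z.1 - z.2)) * |φ z.1| ^ 2 * |φ z.2| ^ q)
          (Ω ×ˢ Ω) →
        |(1 / 4 : ℝ) * ∫ x in Ω, ∫ y in Ω,
            (ε ^ d)⁻¹ * Q (ε⁻¹ • (x - y)) * |φ x| ^ 2 * |φ y| ^ p|
          ≤ Cδ * (1 + (1 / 4 : ℝ) * ∫ x in Ω, ∫ y in Ω,
              (ε ^ d)⁻¹ * K (ε⁻¹ • (x - y)) * |φ x| ^ 2 * |φ y| ^ q)
            + (δ / 4) * ∫ x in Ω, φ x ^ 2 := by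
  classical
  have hδ'0 : 0 < min δ 1 := lt_min hδ one_pos
  refine ⟨((min δ 1)⁻¹) ^ q, by positivity, ?_⟩
  set C : ℝ := ((min δ 1)⁻¹) ^ q with hCdef
  have hC0 : 0 < C := by positivity
  intro ε hε φ hφ hQ' hK'
  haveI : IsFiniteMeasure (volume.restrict Ω) :=
    ⟨by rw [Measure.restrict_apply_univ]; exact hΩb.measure_lt_top⟩
  have hc : 0 < (ε ^ d)⁻¹ := by positivity
  -- measurable representatives
  set ψ : (Fin d → ℝ) → ℝ := hφ.1.mk φ with hψdef
  have hψeq : φ =ᵐ[volume.restrict Ω] ψ := hφ.1.ae_eq_mk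
  have hψm : StronglyMeasurable ψ := hφ.1.stronglyMeasurable_mk
  set K₀ : (Fin d → ℝ) → ℝ := fun v => |hKint.1.mk K v| with hK₀def
  have hK₀eq : K =ᵐ[volume] K₀ := by
    filter_upwards [hKint.1.ae_eq_mk] with v hv
    rw [hK₀def]; dsimp only; rw [← hv, abs_of_nonneg (hK0 v)]
  have hK₀m : Measurable K₀ := hKint.1.stronglyMeasurable_mk.measurable.abs
  have hK₀int : Integrable K₀ := hKint.congr hK₀eq
  have hK₀nn : ∀ v, 0 ≤ K₀ v := fun v => abs_nonneg _
  have hK₀one : ∫ v, K₀ v = 1 := by rw [← integral_congr_ae hK₀eq, hK1]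
  -- a.e. transfer along z ↦ ε⁻¹ • (z.1 - z.2)
  have hQKz : ∀ᵐ z : (Fin d → ℝ) × (Fin d → ℝ),
      |Q (ε⁻¹ • (z.1 - z.2))| ≤ K (ε⁻¹ • (z.1 - z.2)) := by
    filter_upwards [ae_smul_sub_notMem hε.ne' (ae_iff.mp hQK)] with z hz
    exact not_not.mp hz
  have hKz : ∀ᵐ z : (Fin d → ℝ) × (Fin d → ℝ),
      K (ε⁻¹ • (z.1 - z.2)) = K₀ (ε⁻¹ • (z.1 - z.2)) := by
    filter_upwards [ae_smul_sub_notMem hε.ne' (ae_iff.mp hK₀eq)] with z hz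
    exact not_not.mp hz
  -- measures
  set ρ : Measure ((Fin d → ℝ) × (Fin d → ℝ)) :=
    (volume.restrict Ω).prod (volume.restrict Ω) with hρdef
  have hρ2 : ρ = (volume.prod volume).restrict (Ω ×ˢ Ω) := Measure.prod_restrict Ω Ω
  have hρ : ρ = volume.restrict (Ω ×ˢ Ω) := by
    rw [hρ2, ← Measure.volume_eq_prod]
  have hQρ : Integrable
      (fun z : (Fin d → ℝ) × (Fin d → ℝ) =>
        (ε ^ d)⁻¹ * Q (ε⁻¹ • (z.1 - z.2)) * |φ z.1| ^ 2 * |φ z.2| ^ p) ρ := by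
    rw [hρ]; exact hQ'
  have hKρ : Integrable
      (fun z : (Fin d → ℝ) × (Fin d → ℝ) =>
        (ε ^ d)⁻¹ * K (ε⁻¹ • (z.1 - z.2)) * |φ z.1| ^ 2 * |φ z.2| ^ q) ρ := by
    rw [hρ]; exact hK'
  have hQKρ : ∀ᵐ z ∂ρ, |Q (ε⁻¹ • (z.1 - z.2))| ≤ K (ε⁻¹ • (z.1 - z.2)) := by
    rw [hρ2]
    exact ae_restrict_of_ae (by rw [← Measure.volume_eq_prod]; exact hQKz)
  have hKρeq : ∀ᵐ z ∂ρ, K (ε⁻¹ • (z.1 - z.2)) = K₀ (ε⁻¹ • (z.1 - z.2)) := by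
    rw [hρ2]
    exact ae_restrict_of_ae (by rw [← Measure.volume_eq_prod]; exact hKz)
  have hz1 : ∀ᵐ z ∂ρ, z.1 ∈ Ω := ae_fst_prod' (ae_restrict_mem hΩm)
  have hφψ : ∀ᵐ z ∂ρ, φ z.1 = ψ z.1 := ae_fst_prod' hψeq
  -- the auxiliary kernel-times-square function
  set F2 : (Fin d → ℝ) × (Fin d → ℝ) → ℝ := fun z =>
    (ε ^ d)⁻¹ * K₀ (ε⁻¹ • (z.1 - z.2)) * Ω.indicator (fun x => ψ x ^ 2) z.1 with hF2def
  have hψ2 : Integrable (Ω.indicator fun x => ψ x ^ 2) volume := by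
    have hφ2 : MemLp φ 2 (volume.restrict Ω) :=
      hφ.mono_exponent (by exact le_add_self)
    have hψ2ℒ : MemLp ψ 2 (volume.restrict Ω) := hφ2.ae_eq hψeq
    exact IntegrableOn.integrable_indicator hψ2ℒ.integrable_sq hΩm
  have hg₀ : Integrable (fun v : (Fin d → ℝ) => (ε ^ d)⁻¹ * K₀ ((-ε⁻¹) • v)) volume :=
    (hK₀int.comp_smul (neg_ne_zero.2 (inv_ne_zero hε.ne'))).const_mul _
  have hF2vol : Integrable F2 (volume.prod volume) := by
    have h1 := hψ2.convolution_integrand (ContinuousLinearMap.mul ℝ ℝ) hg₀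
    have h2 := h1.swap
    refine h2.congr (Filter.Eventually.of_forall fun z => ?_)
    show Ω.indicator (fun x => ψ x ^ 2) z.1 * ((ε ^ d)⁻¹ * K₀ ((-ε⁻¹) • (z.2 - z.1))) = F2 z
    have hsm : (-ε⁻¹ : ℝ) • (z.2 - z.1) = ε⁻¹ • (z.1 - z.2) := by
      rw [neg_smul, ← smul_neg, neg_sub]
    rw [hF2def]; dsimp only; rw [hsm]; ring
  have hF2ρ : Integrable F2 ρ := by rw [hρ2]; exact hF2vol.integrableOn
  -- inner integral bound
  have hxint : ∀ x : (Fin d → ℝ),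
      Integrable (fun y : (Fin d → ℝ) => (ε ^ d)⁻¹ * K₀ (ε⁻¹ • (x - y))) volume := by
    intro x
    refine (hg₀.comp_sub_right x).congr (Filter.Eventually.of_forall fun y => ?_)
    have hsm : (-ε⁻¹ : ℝ) • (y - x) = ε⁻¹ • (x - y) := by
      rw [neg_smul, ← smul_neg, neg_sub]
    dsimp only; rw [hsm]
  have hinner_le : ∀ x : (Fin d → ℝ),
      (∫ y in Ω, (ε ^ d)⁻¹ * K₀ (ε⁻¹ • (x - y))) ≤ 1 := by
    intro x
    have h1 : (∫ y in Ω, (ε ^ d)⁻¹ * K₀ (ε⁻¹ • (x - y)))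
        ≤ ∫ y, (ε ^ d)⁻¹ * K₀ (ε⁻¹ • (x - y)) :=
      setIntegral_le_integral (hxint x)
        (Filter.Eventually.of_forall fun y => by positivity)
    have h2 : (∫ y, (ε ^ d)⁻¹ * K₀ (ε⁻¹ • (x - y))) = 1 := by
      have h3 : (∫ y, (ε ^ d)⁻¹ * K₀ (ε⁻¹ • (x - y)))
          = ∫ v, (ε ^ d)⁻¹ * K₀ (ε⁻¹ • v) :=
        integral_sub_left_eq_self (fun v => (ε ^ d)⁻¹ * K₀ (ε⁻¹ • v)) volume x
      rw [h3, integral_const_mul]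
      have h4 : (∫ v, K₀ (ε⁻¹ • v)) = |(ε⁻¹ ^ Module.finrank ℝ (Fin d → ℝ))⁻¹| • ∫ v, K₀ v :=
        Measure.integral_comp_smul volume K₀ ε⁻¹
      rw [h4, hK₀one, Module.finrank_fin_fun, smul_eq_mul, mul_one, inv_pow, inv_inv,
        abs_of_nonneg (by positivity : (0:ℝ) ≤ ε ^ d)]
      field_simp
    linarith
  have hinner_nn : ∀ x : (Fin d → ℝ),
      0 ≤ ∫ y in Ω, (ε ^ d)⁻¹ * K₀ (ε⁻¹ • (x - y)) := by
    intro x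
    exact integral_nonneg fun y => by positivity
  -- ∫ F2 ∂ρ ≤ ∫ φ²
  have hF2le : (∫ z, F2 z ∂ρ) ≤ ∫ x in Ω, φ x ^ 2 := by
    rw [hρdef] at hF2ρ ⊢
    rw [integral_prod _ hF2ρ]
    have hmarg : Integrable (fun x => ∫ y in Ω, F2 (x, y)) (volume.restrict Ω) :=
      hF2ρ.integral_prod_left
    have hind : IntegrableOn (Ω.indicator fun x => ψ x ^ 2) Ω volume := hψ2.integrableOn
    have step1 : (∫ x in Ω, ∫ y in Ω, F2 (x, y))
        ≤ ∫ x in Ω, Ω.indicator (fun x => ψ x ^ 2) x := by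
      refine integral_mono hmarg hind fun x => ?_
      have he : (∫ y in Ω, F2 (x, y))
          = (∫ y in Ω, (ε ^ d)⁻¹ * K₀ (ε⁻¹ • (x - y))) * Ω.indicator (fun x => ψ x ^ 2) x := by
        rw [← integral_mul_const]
      rw [he]
      calc (∫ y in Ω, (ε ^ d)⁻¹ * K₀ (ε⁻¹ • (x - y))) * Ω.indicator (fun x => ψ x ^ 2) x
          ≤ 1 * Ω.indicator (fun x => ψ x ^ 2) x := by
            apply mul_le_mul_of_nonneg_right (hinner_le x)
            exact Set.indicator_nonneg (fun y _ => by positivity) x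
        _ = Ω.indicator (fun x => ψ x ^ 2) x := one_mul _
    have step2 : (∫ x in Ω, Ω.indicator (fun x => ψ x ^ 2) x) = ∫ x in Ω, φ x ^ 2 := by
      refine integral_congr_ae ?_
      filter_upwards [ae_restrict_mem hΩm, hψeq] with x hx hx2
      rw [Set.indicator_of_mem hx, hx2]
    linarith
  -- pointwise a.e. domination
  have hbound : ∀ᵐ z ∂ρ,
      |(ε ^ d)⁻¹ * Q (ε⁻¹ • (z.1 - z.2)) * |φ z.1| ^ 2 * |φ z.2| ^ p|
        ≤ C * ((ε ^ d)⁻¹ * K (ε⁻¹ • (z.1 - z.2)) * |φ z.1| ^ 2 * |φ z.2| ^ q) + δ * F2 z := by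
    filter_upwards [hQKρ, hKρeq, hz1, hφψ] with z h1 h2 h3 h4
    have hKu : 0 ≤ K (ε⁻¹ • (z.1 - z.2)) := hK0 _
    have habs : |(ε ^ d)⁻¹ * Q (ε⁻¹ • (z.1 - z.2)) * |φ z.1| ^ 2 * |φ z.2| ^ p|
        = (ε ^ d)⁻¹ * |Q (ε⁻¹ • (z.1 - z.2))| * |φ z.1| ^ 2 * |φ z.2| ^ p := by
      simp [abs_mul, abs_of_nonneg hc.le, abs_pow, abs_abs]
    rw [habs]
    have hF2z : F2 z = (ε ^ d)⁻¹ * K₀ (ε⁻¹ • (z.1 - z.2)) * φ z.1 ^ 2 := by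
      rw [hF2def]; dsimp only; rw [Set.indicator_of_mem h3, h4]
    have hpow := pow_bound_aux hp hpq hδ (|φ z.2|) (abs_nonneg _)
    calc (ε ^ d)⁻¹ * |Q (ε⁻¹ • (z.1 - z.2))| * |φ z.1| ^ 2 * |φ z.2| ^ p
        ≤ (ε ^ d)⁻¹ * K (ε⁻¹ • (z.1 - z.2)) * |φ z.1| ^ 2 * |φ z.2| ^ p := by
          have := mul_le_mul_of_nonneg_left h1 hc.le
          apply mul_le_mul_of_nonneg_right _ (by positivity)
          exact mul_le_mul_of_nonneg_right this (by positivity)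
      _ ≤ (ε ^ d)⁻¹ * K (ε⁻¹ • (z.1 - z.2)) * |φ z.1| ^ 2 * (C * |φ z.2| ^ q + δ) := by
          refine mul_le_mul_of_nonneg_left hpow ?_
          have : (0:ℝ) ≤ |φ z.1| ^ 2 := by positivity
          exact mul_nonneg (mul_nonneg hc.le hKu) this
      _ = C * ((ε ^ d)⁻¹ * K (ε⁻¹ • (z.1 - z.2)) * |φ z.1| ^ 2 * |φ z.2| ^ q)
            + δ * ((ε ^ d)⁻¹ * K (ε⁻¹ • (z.1 - z.2)) * φ z.1 ^ 2) := by
          rw [← sq_abs (φ z.1)]; ring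
      _ = C * ((ε ^ d)⁻¹ * K (ε⁻¹ • (z.1 - z.2)) * |φ z.1| ^ 2 * |φ z.2| ^ q) + δ * F2 z := by
          rw [hF2z, h2]
  -- convert iterated integrals to product integrals
  have hIQ : (∫ x in Ω, ∫ y in Ω,
        (ε ^ d)⁻¹ * Q (ε⁻¹ • (x - y)) * |φ x| ^ 2 * |φ y| ^ p)
      = ∫ z, (fun z : (Fin d → ℝ) × (Fin d → ℝ) =>
          (ε ^ d)⁻¹ * Q (ε⁻¹ • (z.1 - z.2)) * |φ z.1| ^ 2 * |φ z.2| ^ p) z ∂ρ := by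
    rw [hρdef, integral_prod _ hQρ]
  have hIK : (∫ x in Ω, ∫ y in Ω,
        (ε ^ d)⁻¹ * K (ε⁻¹ • (x - y)) * |φ x| ^ 2 * |φ y| ^ q)
      = ∫ z, (fun z : (Fin d → ℝ) × (Fin d → ℝ) =>
          (ε ^ d)⁻¹ * K (ε⁻¹ • (z.1 - z.2)) * |φ z.1| ^ 2 * |φ z.2| ^ q) z ∂ρ := by
    rw [hρdef, integral_prod _ hKρ]
  rw [hIQ, hIK]
  set IQ := ∫ z, (fun z : (Fin d → ℝ) × (Fin d → ℝ) =>
      (ε ^ d)⁻¹ * Q (ε⁻¹ • (z.1 - z.2)) * |φ z.1| ^ 2 * |φ z.2| ^ p) z ∂ρ with hIQdef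
  set IK := ∫ z, (fun z : (Fin d → ℝ) × (Fin d → ℝ) =>
      (ε ^ d)⁻¹ * K (ε⁻¹ • (z.1 - z.2)) * |φ z.1| ^ 2 * |φ z.2| ^ q) z ∂ρ with hIKdef
  have hmain : |IQ| ≤ C * IK + δ * ∫ z, F2 z ∂ρ := by
    calc |IQ| ≤ ∫ z, |(ε ^ d)⁻¹ * Q (ε⁻¹ • (z.1 - z.2)) * |φ z.1| ^ 2 * |φ z.2| ^ p| ∂ρ :=
          (abs_integral_le_integral_abs_aux _)
      _ ≤ ∫ z, (C * ((ε ^ d)⁻¹ * K (ε⁻¹ • (z.1 - z.2)) * |φ z.1| ^ 2 * |φ z.2| ^ q)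
            + δ * F2 z) ∂ρ :=
          integral_mono_ae hQρ.abs ((hKρ.const_mul C).add (hF2ρ.const_mul δ)) hbound
      _ = C * IK + δ * ∫ z, F2 z ∂ρ := by
          rw [integral_add (hKρ.const_mul C) (hF2ρ.const_mul δ), integral_const_mul,
            integral_const_mul]
  have habs4 : |(1/4 : ℝ) * IQ| = (1/4 : ℝ) * |IQ| := by
    rw [abs_mul]; norm_num
  have hF2nn : 0 ≤ ∫ z, F2 z ∂ρ := by
    refine integral_nonneg fun z => ?_
    rw [hF2def]
    have : 0 ≤ Ω.indicator (fun x => ψ x ^ 2) z.1 :=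
      Set.indicator_nonneg (fun y _ => by positivity) _
    have h2 : 0 ≤ K₀ (ε⁻¹ • (z.1 - z.2)) := hK₀nn _
    positivity
  rw [habs4]
  nlinarith [hmain, hF2le, hδ.le, hC0.le, abs_nonneg IQ]
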